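/- For A symmetric invertible, the base case of the commutator identity holds: (tr Δ_A) · E_{ij} = E_{ij} · (tr Δ_A) + 2 · (Δ_A)_{ij} as differential operators on smooth functions on ℝ^(m×n). -/

import Mathlib

open scoped BigOperators
open Matrix

/-- Partial derivative `∂/∂U_{ij}` of a function on `ℝ^(m×n)`. -/
noncomputable def pd {m n : ℕ} (i : Fin m) (j : Fin n)
    (f : (Fin m → Fin n → ℝ) → ℝ) : (Fin m → Fin n → ℝ) → ℝ :=
  fun U => fderiv ℝ f U (Pi.single i (Pi.single j 1))

/-- Entry `(i,j)` of the generalized Euler operator `E = Uᵀ ∂/∂U`. -/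
noncomputable def eulerOp {m n : ℕ} (i j : Fin n)
    (f : (Fin m → Fin n → ℝ) → ℝ) : (Fin m → Fin n → ℝ) → ℝ :=
  fun U => ∑ d, U d i * pd d j f U

/-- Entry `(i,j)` of the generalized Laplacian `Δ_A = (∂/∂U)ᵀ A⁻¹ (∂/∂U)`. -/
noncomputable def lapA {m n : ℕ} (A : Matrix (Fin m) (Fin m) ℝ) (i j : Fin n)
    (f : (Fin m → Fin n → ℝ) → ℝ) : (Fin m → Fin n → ℝ) → ℝ :=
  fun U => ∑ a, ∑ b, A⁻¹ a b * pd a i (pd b j f) U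

/-- The trace `tr Δ_A` of the generalized Laplacian. -/
noncomputable def trLapA {m n : ℕ} (A : Matrix (Fin m) (Fin m) ℝ)
    (f : (Fin m → Fin n → ℝ) → ℝ) : (Fin m → Fin n → ℝ) → ℝ :=
  fun U => ∑ c : Fin n, lapA A c c f U

section helpers
variable {m n : ℕ}

lemma pd_contDiff {f : (Fin m → Fin n → ℝ) → ℝ} (hf : ContDiff ℝ (⊤ : ℕ∞) f)
    (a : Fin m) (c : Fin n) : ContDiff ℝ (⊤ : ℕ∞) (pd a c f) :=
  (hf.fderiv_right (by simp)).clm_apply contDiff_const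

lemma pd_diff {f : (Fin m → Fin n → ℝ) → ℝ} (hf : ContDiff ℝ (⊤ : ℕ∞) f)
    {U : Fin m → Fin n → ℝ} : DifferentiableAt ℝ f U :=
  (hf.differentiable (by simp)).differentiableAt

lemma diff_coord (d : Fin m) (e : Fin n) (U : Fin m → Fin n → ℝ) :
    DifferentiableAt ℝ (fun V : Fin m → Fin n → ℝ => V d e) U :=
  ((ContinuousLinearMap.proj e).comp
    (ContinuousLinearMap.proj (R := ℝ) (φ := fun _ : Fin m => Fin n → ℝ) d)).differentiableAt

lemma pd_coord (a d : Fin m) (c e : Fin n) (U : Fin m → Fin n → ℝ) :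
    pd a c (fun V => V d e) U = if d = a ∧ e = c then 1 else 0 := by
  have h : (fun V : Fin m → Fin n → ℝ => V d e) = ((ContinuousLinearMap.proj e).comp
      (ContinuousLinearMap.proj (R := ℝ) (φ := fun _ : Fin m => Fin n → ℝ) d)) := rfl
  rw [pd, h, ContinuousLinearMap.fderiv]
  by_cases h1 : d = a <;> by_cases h2 : e = c <;>
    simp [h1, h2, Pi.single_apply, ContinuousLinearMap.proj_apply]

lemma pd_sum {ι : Type*} (s : Finset ι) (g : ι → (Fin m → Fin n → ℝ) → ℝ)
    (a : Fin m) (c : Fin n) {U : Fin m → Fin n → ℝ}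
    (h : ∀ d ∈ s, DifferentiableAt ℝ (g d) U) :
    pd a c (fun V => ∑ d ∈ s, g d V) U = ∑ d ∈ s, pd a c (g d) U := by
  simp only [pd]
  rw [fderiv_fun_sum h]
  simp

lemma pd_add {g h : (Fin m → Fin n → ℝ) → ℝ} (a : Fin m) (c : Fin n)
    {U : Fin m → Fin n → ℝ} (hg : DifferentiableAt ℝ g U) (hh : DifferentiableAt ℝ h U) :
    pd a c (fun V => g V + h V) U = pd a c g U + pd a c h U := by
  simp only [pd]; rw [fderiv_fun_add hg hh]; simp

lemma pd_mul {g h : (Fin m → Fin n → ℝ) → ℝ} (a : Fin m) (c : Fin n)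
    {U : Fin m → Fin n → ℝ} (hg : DifferentiableAt ℝ g U) (hh : DifferentiableAt ℝ h U) :
    pd a c (fun V => g V * h V) U = pd a c g U * h U + g U * pd a c h U := by
  simp only [pd]; rw [fderiv_fun_mul hg hh]; simp; ring

lemma pd_const_mul (r : ℝ) {g : (Fin m → Fin n → ℝ) → ℝ} (a : Fin m) (c : Fin n)
    {U : Fin m → Fin n → ℝ} (hg : DifferentiableAt ℝ g U) :
    pd a c (fun V => r * g V) U = r * pd a c g U := by
  simp only [pd]; rw [fderiv_const_mul hg]; simp

lemma pd_comm {f : (Fin m → Fin n → ℝ) → ℝ} (hf : ContDiff ℝ (⊤ : ℕ∞) f)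
    (a b : Fin m) (c d : Fin n) :
    pd a c (pd b d f) = pd b d (pd a c f) := by
  funext U
  have hd : DifferentiableAt ℝ (fderiv ℝ f) U :=
    ((hf.fderiv_right (m := (⊤ : ℕ∞)) (by simp)).differentiable (by simp)).differentiableAt
  have key : ∀ v w : Fin m → Fin n → ℝ, fderiv ℝ (fun V => fderiv ℝ f V w) U v
      = fderiv ℝ (fderiv ℝ f) U v w := by
    intro v w
    rw [fderiv_clm_apply hd (differentiableAt_const _)]
    simp
  show fderiv ℝ (fun V => fderiv ℝ f V _) U _ = fderiv ℝ (fun V => fderiv ℝ f V _) U _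
  rw [key, key, (hf.contDiffAt.isSymmSndFDerivAt (by rw [minSmoothness_of_isRCLikeNormedField]; exact WithTop.coe_le_coe.mpr (le_top : (2 : ℕ∞) ≤ ⊤))).eq]

lemma pd_euler {f : (Fin m → Fin n → ℝ) → ℝ} (hf : ContDiff ℝ (⊤ : ℕ∞) f) (i j c : Fin n) (b : Fin m) :
    pd b c (eulerOp i j f) = fun U =>
      (if i = c then pd b j f U else 0) + ∑ d, U d i * pd b c (pd d j f) U := by
  funext U
  have hterm : ∀ d : Fin m, DifferentiableAt ℝ (fun V : Fin m → Fin n → ℝ => V d i * pd d j f V) U :=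
    fun d => (diff_coord d i U).mul (pd_diff (pd_contDiff hf d j))
  have he : eulerOp i j f = fun V => ∑ d, V d i * pd d j f V := rfl
  rw [he, pd_sum Finset.univ _ b c (fun d _ => hterm d)]
  have hone : ∀ d : Fin m, pd b c (fun V => V d i * pd d j f V) U
      = (if d = b ∧ i = c then 1 else 0) * pd d j f U + U d i * pd b c (pd d j f) U := by
    intro d
    rw [pd_mul b c (diff_coord d i U) (pd_diff (pd_contDiff hf d j)), pd_coord]
  simp only [hone]
  rw [Finset.sum_add_distrib]
  congr 1
  by_cases hic : i = c
  · simp [hic]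
  · simp [hic]

lemma pd_pd_euler {f : (Fin m → Fin n → ℝ) → ℝ} (hf : ContDiff ℝ (⊤ : ℕ∞) f) (i j c : Fin n)
    (a b : Fin m) (U : Fin m → Fin n → ℝ) :
    pd a c (pd b c (eulerOp i j f)) U =
      (if i = c then pd a c (pd b j f) U + pd b c (pd a j f) U else 0)
        + ∑ d, U d i * pd a c (pd b c (pd d j f)) U := by
  rw [pd_euler hf i j c b]
  have hterm : ∀ d : Fin m, DifferentiableAt ℝ
      (fun V : Fin m → Fin n → ℝ => V d i * pd b c (pd d j f) V) U :=
    fun d => (diff_coord d i U).mul (pd_diff (pd_contDiff (pd_contDiff hf d j) b c))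
  have hsum : DifferentiableAt ℝ
      (fun V : Fin m → Fin n → ℝ => ∑ d, V d i * pd b c (pd d j f) V) U :=
    DifferentiableAt.fun_sum (fun d _ => hterm d)
  have hgen : ∀ d : Fin m, pd a c (fun V : Fin m → Fin n → ℝ => V d i * pd b c (pd d j f) V) U
      = (if d = a ∧ i = c then 1 else 0) * pd b c (pd d j f) U
        + U d i * pd a c (pd b c (pd d j f)) U := by
    intro d
    rw [pd_mul a c (diff_coord d i U) (pd_diff (pd_contDiff (pd_contDiff hf d j) b c)), pd_coord]
  by_cases hic : i = c
  · subst hic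
    simp only [eq_self_iff_true, if_true]
    rw [pd_add a i (pd_diff (pd_contDiff hf b j)) hsum,
      pd_sum Finset.univ _ a i (fun d _ => hterm d)]
    simp only [hgen]
    rw [Finset.sum_add_distrib]
    simp only [and_true, eq_self_iff_true, if_true, ite_mul, one_mul, zero_mul,
      Finset.sum_ite_eq', Finset.mem_univ]
    ring
  · simp only [if_neg hic, zero_add]
    rw [pd_sum Finset.univ _ a c (fun d _ => hterm d)]
    simp only [hgen, hic, and_false, if_false, zero_mul, zero_add]

end helpers

/-- for symmetric invertible `A`, the base-case commutator
identity `(tr Δ_A) · E_{ij} = E_{ij} · (tr Δ_A) + 2 (Δ_A)_{ij}` holds on smooth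
functions on `ℝ^(m×n)`. -/
theorem stmt5 {m n : ℕ} (A : Matrix (Fin m) (Fin m) ℝ) (hAs : Aᵀ = A)
    (hA : IsUnit A.det) (i j : Fin n)
    (f : (Fin m → Fin n → ℝ) → ℝ) (hf : ContDiff ℝ (⊤ : ℕ∞) f)
    (U : Fin m → Fin n → ℝ) :
    trLapA A (eulerOp i j f) U =
      eulerOp i j (trLapA A f) U + 2 * lapA A i j f U := by
  classical
  -- symmetry of A⁻¹
  have hAinv : ∀ a b : Fin m, A⁻¹ b a = A⁻¹ a b := by
    intro a b
    have h : A⁻¹ᵀ = A⁻¹ := by rw [Matrix.transpose_nonsing_inv, hAs]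
    conv_rhs => rw [← h]
    rfl
  -- swap derivatives
  have hswap : ∀ (a b d : Fin m) (c : Fin n),
      pd a c (pd b c (pd d j f)) = pd d j (pd a c (pd b c f)) := by
    intro a b d c
    have h1 : pd b c (pd d j f) = pd d j (pd b c f) := pd_comm hf b d c j
    rw [h1, pd_comm (pd_contDiff hf b c) a d c j]
  -- differentiability of summands of trLapA f
  have hin : ∀ (aa bb : Fin m) (cc : Fin n) (V : Fin m → Fin n → ℝ),
      DifferentiableAt ℝ (fun W => A⁻¹ aa bb * pd aa cc (pd bb cc f) W) V :=
    fun aa bb cc V => (pd_diff (pd_contDiff (pd_contDiff hf bb cc) aa cc)).const_mul _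
  -- derivative of trLapA f
  have step : ∀ d : Fin m, pd d j (trLapA A f) U
      = ∑ c : Fin n, ∑ a, ∑ b, A⁻¹ a b * pd d j (pd a c (pd b c f)) U := by
    intro d
    have e1 : trLapA A f = fun V => ∑ c : Fin n, ∑ a, ∑ b, A⁻¹ a b * pd a c (pd b c f) V := rfl
    rw [e1, pd_sum Finset.univ _ d j (fun c _ => DifferentiableAt.fun_sum
      fun a _ => DifferentiableAt.fun_sum fun b _ => hin a b c U)]
    refine Finset.sum_congr rfl fun c _ => ?_
    rw [pd_sum Finset.univ _ d j (fun a _ => DifferentiableAt.fun_sum fun b _ => hin a b c U)]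
    refine Finset.sum_congr rfl fun a _ => ?_
    rw [pd_sum Finset.univ _ d j (fun b _ => hin a b c U)]
    refine Finset.sum_congr rfl fun b _ => ?_
    exact pd_const_mul _ d j (pd_diff (pd_contDiff (pd_contDiff hf b c) a c))
  -- expand the LHS
  have lhs1 : trLapA A (eulerOp i j f) U
      = ∑ c : Fin n, ∑ a, ∑ b, A⁻¹ a b *
          ((if i = c then pd a c (pd b j f) U + pd b c (pd a j f) U else 0)
            + ∑ d, U d i * pd d j (pd a c (pd b c f)) U) := by
    simp only [trLapA, lapA]
    refine Finset.sum_congr rfl fun c _ => Finset.sum_congr rfl fun a _ =>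
      Finset.sum_congr rfl fun b _ => ?_
    rw [pd_pd_euler hf i j c a b U]
    congr 2
    refine Finset.sum_congr rfl fun d _ => ?_
    rw [hswap a b d c]
  rw [lhs1]
  simp only [mul_add, Finset.sum_add_distrib]
  -- the delta part
  have hS1 : (∑ c : Fin n, ∑ a, ∑ b, A⁻¹ a b *
      (if i = c then pd a c (pd b j f) U + pd b c (pd a j f) U else 0))
      = 2 * lapA A i j f U := by
    have hpull : ∀ c : Fin n, (∑ a, ∑ b, A⁻¹ a b *
        (if i = c then pd a c (pd b j f) U + pd b c (pd a j f) U else 0))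
        = if i = c then ∑ a, ∑ b, A⁻¹ a b *
            (pd a c (pd b j f) U + pd b c (pd a j f) U) else 0 := by
      intro c; by_cases h : i = c <;> simp [h]
    simp only [hpull, Finset.sum_ite_eq, Finset.mem_univ, if_true]
    have hsw : ∑ a, ∑ b, A⁻¹ a b * pd b i (pd a j f) U
        = ∑ a, ∑ b, A⁻¹ a b * pd a i (pd b j f) U := by
      rw [Finset.sum_comm]
      exact Finset.sum_congr rfl fun x _ => Finset.sum_congr rfl fun y _ => by rw [hAinv x y]
    simp only [mul_add, Finset.sum_add_distrib, hsw, lapA]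
    ring
  rw [hS1]
  -- the remaining part
  have hS2 : (∑ c : Fin n, ∑ a, ∑ b, A⁻¹ a b *
      ∑ d, U d i * pd d j (pd a c (pd b c f)) U) = eulerOp i j (trLapA A f) U := by
    have e2 : eulerOp i j (trLapA A f) U = ∑ d, U d i * pd d j (trLapA A f) U := rfl
    rw [e2]
    simp only [step, Finset.mul_sum]
    -- both sides are quadruple sums; rearrange
    have swap4 : ∀ F : Fin n → Fin m → Fin m → Fin m → ℝ,
        (∑ c : Fin n, ∑ a, ∑ b, ∑ d, F c a b d) = ∑ d, ∑ c : Fin n, ∑ a, ∑ b, F c a b d := by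
      intro F
      rw [show (∑ c : Fin n, ∑ a, ∑ b, ∑ d, F c a b d)
          = ∑ c : Fin n, ∑ d, ∑ a, ∑ b, F c a b d from
        Finset.sum_congr rfl fun c _ => by
          rw [show (∑ a, ∑ b, ∑ d, F c a b d) = ∑ a, ∑ d, ∑ b, F c a b d from
            Finset.sum_congr rfl fun a _ => Finset.sum_comm]
          exact Finset.sum_comm]
      exact Finset.sum_comm
    rw [swap4]
    refine Finset.sum_congr rfl fun d _ => Finset.sum_congr rfl fun c _ =>
      Finset.sum_congr rfl fun a _ => Finset.sum_congr rfl fun b _ => by ring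
  rw [hS2]
  ring
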